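/- arXiv:2302.08184 — 3 statements merged into one kernel-verified Lean document; each statement's English description precedes it below -/
import Mathlib

section
/- Let f̃ : ℝ² → ℝ² be a lift of a torus homeomorphism homotopic to the identity. If there exists v ∈ ℝ² ∖ {0} such that f̃ does not have bounded deviation from v, then sup_{n ∈ ℕ} d_n = +∞, where d_n is the diameter of f̃ⁿ([0,1]²). -/
open Metric Set Filter Topology

noncomputable section

abbrev E2 : Type := EuclideanSpace ℝ (Fin 2)

/-- The image in `ℝ²` of an integer vector. -/
def intVec (v : Fin 2 → ℤ) : E2 := WithLp.toLp 2 (fun i => (v i : ℝ))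

/-- `f` is a lift of a torus homeomorphism homotopic to the identity. -/
def IsLift (f : E2 → E2) : Prop :=
  ∀ (x : E2) (v : Fin 2 → ℤ), f (x + intVec v) = f x + intVec v

/-- Lift condition for a homeomorphism of the torus whose linear part is the
integer matrix `A`. -/
def IsLiftMat (f : E2 → E2) (A : Matrix (Fin 2) (Fin 2) ℤ) : Prop :=
  ∀ (x : E2) (v : Fin 2 → ℤ), f (x + intVec v) = f x + intVec (A.mulVec v)

/-- Lift condition for a homeomorphism homotopic to the Dehn twist with matrix
`[[1,k₀],[0,1]]`. -/
def IsDehnLift (f : E2 → E2) (k₀ : ℤ) : Prop :=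
  (∀ x : E2, f (x + intVec ![1, 0]) = f x + intVec ![1, 0]) ∧
  (∀ x : E2, f (x + intVec ![0, 1]) = f x + intVec ![k₀, 1])

/-- The fundamental domain `D = [0,1] × [0,1]`. -/
def Dom : Set E2 := {x | x 0 ∈ Icc (0:ℝ) 1 ∧ x 1 ∈ Icc (0:ℝ) 1}

/-- `d_n`, the diameter of `f̃ⁿ(D)`. -/
def dn (f : E2 → E2) (n : ℕ) : ℝ := Metric.diam (f^[n] '' Dom)

/-- `A_n = d_n⁻¹ • (f̃ⁿ(D) − f̃ⁿ(x₀))`. -/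
def An (f : E2 → E2) (x₀ : E2) (n : ℕ) : Set E2 :=
  (fun y => (dn f n)⁻¹ • (y - f^[n] x₀)) '' (f^[n] '' Dom)

/-- A good limit value of the sequence `(A_n)`: a compact set which is the
Hausdorff limit of a subsequence `(A_{n_k})` with `d_{n_k} → +∞`. -/
def IsGoodLimit (f : E2 → E2) (x₀ : E2) (A : Set E2) : Prop :=
  IsCompact A ∧ ∃ nk : ℕ → ℕ, StrictMono nk ∧
    Tendsto (fun k => dn f (nk k)) atTop atTop ∧
    Tendsto (fun k => Metric.hausdorffDist (An f x₀ (nk k)) A) atTop (nhds 0)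

/-- A vector of irrational slope: nonzero and not a real multiple of a nonzero
integer vector. -/
def IrrationalSlope (u : E2) : Prop :=
  u ≠ 0 ∧ ¬∃ (t : ℝ) (w : Fin 2 → ℤ), w ≠ 0 ∧ u = t • intVec w

/-- `f` has bounded deviation from direction `v`. -/
def BoundedDeviation (f : E2 → E2) (v : E2) : Prop :=
  ∃ (ρ : E2) (M : ℝ), 0 ≤ M ∧
    ∀ (x : E2) (n : ℕ), |(inner ℝ (f^[n] x - x - (n : ℝ) • ρ) v : ℝ)| ≤ M

/-- The rotation set of `f`. -/
def rotSet (f : E2 → E2) : Set E2 :=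
  {w | ∃ (y : ℕ → E2) (m : ℕ → ℕ), Tendsto m atTop atTop ∧
    Tendsto (fun k => (m k : ℝ)⁻¹ • (f^[m k] (y k) - y k)) atTop (nhds w)}

/-- The line `ℝ•u` through the origin. -/
def lineThrough (u : E2) : Set E2 := {x | ∃ t : ℝ, x = t • u}

/-!
If the diameters `dn f n` were bounded by `M`, then by `ℤ²`-periodicity of the displacement
`f̃ⁿ x - x`, every displacement would lie within `M + 2` of `f̃ⁿ 0 - 0`. Hence
`a n = ⟪f̃ⁿ 0, v⟫` is additive up to a bounded error, and such a sequence stays within a bounded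
distance of `n * L` for some `L` (Fekete's lemma applied to `a + C` and `C - a`). Choosing `ρ`
with `⟪ρ, v⟫ = L` gives bounded deviation from `v`.
-/

open scoped RealInnerProductSpace

namespace Subadditive

variable {u : ℕ → ℝ}

lemma apply_zero_nonneg (h : Subadditive u) : 0 ≤ u 0 := by
  have := h 0 0
  simp only [add_zero] at this
  linarith

lemma mul_lim_le (h : Subadditive u) (hbdd : BddBelow (range fun n => u n / n)) (n : ℕ) :
    n * h.lim ≤ u n := by
  rcases eq_or_ne n 0 with rfl | hn
  · simpa using h.apply_zero_nonneg
  · rw [← le_div_iff₀' (by positivity)]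
    exact h.lim_le_div hbdd hn

lemma bddBelow_div_of_nonneg_add {w : ℕ → ℝ} (hw : Subadditive w) (huw : ∀ n, 0 ≤ u n + w n) :
    BddBelow (range fun n => u n / n) := by
  refine ⟨min 0 (-(w 1 + w 0)), ?_⟩
  rintro _ ⟨n, rfl⟩
  rcases eq_or_ne n 0 with rfl | hn
  · simp
  · have hn1 : (1 : ℝ) ≤ n := by exact_mod_cast Nat.one_le_iff_ne_zero.2 hn
    have hwn : w n ≤ n * w 1 + w 0 := by simpa using hw.apply_mul_add_le n 1 0
    have hw0 : 1 * w 0 ≤ n * w 0 := mul_le_mul_of_nonneg_right hn1 hw.apply_zero_nonneg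
    refine (min_le_right _ _).trans ?_
    rw [le_div_iff₀ (by positivity)]
    linarith [huw n]

end Subadditive

theorem exists_abs_sub_mul_le_of_abs_add_sub_le {a : ℕ → ℝ} {C : ℝ}
    (h : ∀ m n, |a (m + n) - a m - a n| ≤ C) : ∃ L : ℝ, ∀ n : ℕ, |a n - n * L| ≤ C := by
  have hC : 0 ≤ C := (abs_nonneg _).trans (h 0 0)
  have hu : Subadditive fun n => a n + C := fun m n => by linarith [(abs_le.1 (h m n)).2]
  have hw : Subadditive fun n => C - a n := fun m n => by linarith [(abs_le.1 (h m n)).1]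
  have bu : BddBelow (range fun n => (a n + C) / n) :=
    hw.bddBelow_div_of_nonneg_add fun n => by linarith
  have bw : BddBelow (range fun n => (C - a n) / n) :=
    hu.bddBelow_div_of_nonneg_add fun n => by linarith
  have hlim : hw.lim = -hu.lim := by
    refine eq_neg_of_add_eq_zero_right (tendsto_nhds_unique
      ((hu.tendsto_lim bu).add (hw.tendsto_lim bw)) ?_)
    convert tendsto_const_div_atTop_nhds_zero_nat (2 * C) using 2 with n
    ring
  refine ⟨hu.lim, fun n => abs_le.2 ⟨?_, ?_⟩⟩
  · linarith [hu.mul_lim_le bu n]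
  · have := hw.mul_lim_le bw n
    rw [hlim, mul_neg] at this
    linarith

theorem boundedDeviation_of_abs_inner_le {f : E2 → E2} {v : E2} (hv : v ≠ 0) {K : ℝ}
    (hK : ∀ x n, |⟪f^[n] x - x - f^[n] 0, v⟫| ≤ K) : BoundedDeviation f v := by
  have hquasi : ∀ m n, |⟪f^[m + n] 0, v⟫ - ⟪f^[m] 0, v⟫ - ⟪f^[n] 0, v⟫| ≤ K := fun m n => by
    have := hK (f^[n] 0) m
    rwa [← Function.iterate_add_apply, inner_sub_left, inner_sub_left, sub_right_comm] at this
  obtain ⟨L, hL⟩ := exists_abs_sub_mul_le_of_abs_add_sub_le (a := fun n => ⟪f^[n] 0, v⟫) hquasi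
  set ρ : E2 := (L / ‖v‖ ^ 2) • v
  have hρ : ⟪ρ, v⟫ = L := by
    rw [real_inner_smul_left, real_inner_self_eq_norm_sq,
      div_mul_cancel₀ _ (pow_ne_zero 2 (norm_ne_zero_iff.2 hv))]
  refine ⟨ρ, K + K, by linarith [(abs_nonneg _).trans (hK 0 0)], fun x n => ?_⟩
  have hsplit : ⟪f^[n] x - x - (n : ℝ) • ρ, v⟫
      = ⟪f^[n] x - x - f^[n] 0, v⟫ + (⟪f^[n] 0, v⟫ - n * L) := by
    simp only [inner_sub_left, real_inner_smul_left, hρ]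
    ring
  rw [hsplit]
  exact (abs_add_le _ _).trans (add_le_add (hK x n) (hL n))

theorem IsLift.iterate_add_intVec {f : E2 → E2} (hf : IsLift f) (n : ℕ) (x : E2)
    (w : Fin 2 → ℤ) : f^[n] (x + intVec w) = f^[n] x + intVec w :=
  Function.Commute.iterate_left (fun y => hf y w) n x

theorem exists_sub_intVec_mem_Dom (x : E2) : ∃ w : Fin 2 → ℤ, x - intVec w ∈ Dom := by
  refine ⟨fun i => ⌊x i⌋, ?_, ?_⟩ <;>
  · change x _ - ((⌊x _⌋ : ℤ) : ℝ) ∈ Icc (0 : ℝ) 1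
    rw [Int.self_sub_floor]
    exact ⟨Int.fract_nonneg _, (Int.fract_lt_one _).le⟩

theorem norm_le_two_of_mem_Dom {y : E2} (hy : y ∈ Dom) : ‖y‖ ≤ 2 := by
  obtain ⟨⟨h00, h01⟩, ⟨h10, h11⟩⟩ := hy
  rw [EuclideanSpace.norm_eq, Real.sqrt_le_left (by norm_num), Fin.sum_univ_two,
    Real.norm_eq_abs, Real.norm_eq_abs, sq_abs, sq_abs]
  nlinarith

theorem isCompact_Dom : IsCompact Dom := by
  refine Metric.isCompact_of_isClosed_isBounded ?_ ?_
  · exact (isClosed_Icc.preimage (EuclideanSpace.proj 0).continuous).inter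
      (isClosed_Icc.preimage (EuclideanSpace.proj 1).continuous)
  · exact (isBounded_closedBall (x := 0) (r := 2)).subset fun y hy =>
      mem_closedBall_zero_iff.2 (norm_le_two_of_mem_Dom hy)

theorem dist_iterate_le_dn {f : E2 → E2} (hc : Continuous f) (n : ℕ) {x y : E2}
    (hx : x ∈ Dom) (hy : y ∈ Dom) : dist (f^[n] x) (f^[n] y) ≤ dn f n :=
  dist_le_diam_of_mem (isCompact_Dom.image (hc.iterate n)).isBounded ⟨x, hx, rfl⟩ ⟨y, hy, rfl⟩

theorem norm_iterate_sub_sub_iterate_zero_le {f : E2 → E2} (hf : IsLift f) (hc : Continuous f)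
    (n : ℕ) (x : E2) : ‖f^[n] x - x - f^[n] 0‖ ≤ dn f n + 2 := by
  obtain ⟨w, hy⟩ := exists_sub_intVec_mem_Dom x
  set y := x - intVec w
  have hx : x = y + intVec w := (sub_add_cancel x _).symm
  have h0 : (0 : E2) ∈ Dom := ⟨⟨le_rfl, zero_le_one⟩, ⟨le_rfl, zero_le_one⟩⟩
  have hdisp : f^[n] x - x - f^[n] 0 = (f^[n] y - f^[n] 0) - y := by
    rw [hx, hf.iterate_add_intVec]
    abel
  rw [hdisp]
  calc ‖(f^[n] y - f^[n] 0) - y‖ ≤ ‖f^[n] y - f^[n] 0‖ + ‖y‖ := norm_sub_le _ _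
    _ ≤ dn f n + 2 := add_le_add (dist_eq_norm (f^[n] y) _ ▸ dist_iterate_le_dn hc n hy h0)
        (norm_le_two_of_mem_Dom hy)

/-- Lemma 2.1 (first part): if `f` has unbounded deviation in some direction,
then the diameters `d_n` are unbounded. -/
theorem diam_unbounded_of_unbounded_deviation (f : E2 ≃ₜ E2) (hf : IsLift ⇑f)
    (v : E2) (hv : v ≠ 0) (hdev : ¬ BoundedDeviation ⇑f v) :
    ∀ M : ℝ, ∃ n : ℕ, M < dn ⇑f n := by
  by_contra! hbdd
  obtain ⟨M, hM⟩ := hbdd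
  refine hdev (boundedDeviation_of_abs_inner_le hv (K := (M + 2) * ‖v‖) fun x n => ?_)
  calc |⟪f^[n] x - x - f^[n] 0, v⟫| ≤ ‖f^[n] x - x - f^[n] 0‖ * ‖v‖ :=
        abs_real_inner_le_norm _ _
    _ ≤ (M + 2) * ‖v‖ := by
        gcongr
        linarith [norm_iterate_sub_sub_iterate_zero_le hf f.continuous n x, hM n]
end
end

section
/- Let M ≥ 0 and C ≥ 0 be real numbers. Let γ₂ : [0,1] → ℝ² be a continuous path from (−M, 0) to (M, 0) whose image is contained in [−M, M] × [−C, C]. Let γ₁ : [0,1] → ℝ² be a continuous path from a point (a⁻, b⁻) to a point (a⁺, b⁺) whose image is contained in (−M, M) × ℝ, with b⁻ < −C and b⁺ > C. Then the images of γ₁ and γ₂ intersect. -/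
/-!
Consider `g (s, t) = γ₁ s - γ₂ t` on the unit square. Its first coordinate is positive on the
bottom edge and negative on the top edge, its second coordinate is negative on the left edge and
positive on the right edge, so it has a zero by the Poincaré–Miranda theorem.

For the latter: if `g` had no zero, the square being simply connected, `g` would have a continuous
argument `θ` (a lift through the covering `exp`). On each edge `g` stays in an open half-plane, on
which the argument turns monotonically, and the signs at the corners force
`θ(0,0) < θ(1,0) < θ(1,1) < θ(0,1) < θ(0,0)`.
-/

open Set Real unitInterval

instance unitInterval.instContractibleSpace : ContractibleSpace I :=
  (convex_Icc (0 : ℝ) 1).contractibleSpace ⟨0, unitInterval.zero_mem⟩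

instance unitInterval.instLocallyPathConnectedSpace : LocallyPathConnectedSpace I :=
  (convex_Icc (0 : ℝ) 1).locallyPathConnectedSpace

theorem Complex.exists_continuous_exp_eq {A : Type*} [TopologicalSpace A]
    [SimplyConnectedSpace A] [LocallyPathConnectedSpace A] {f : A → ℂ} (hf : Continuous f)
    (hf₀ : ∀ a, f a ≠ 0) : ∃ L : A → ℂ, Continuous L ∧ ∀ a, Complex.exp (L a) = f a := by
  obtain ⟨a₀⟩ := (inferInstance : Nonempty A)
  obtain ⟨L, ⟨-, hL⟩, -⟩ := Complex.isCoveringMapOn_exp.existsUnique_continuousMap_lifts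
    ⟨f, hf⟩ (Complex.exp_log (hf₀ a₀)) hf₀
  exact ⟨L, L.continuous, congr_fun hL⟩

theorem strictMonoOn_sin_sub {S : Set ℝ} (hS : IsPreconnected S) {c : ℝ}
    (hcos : ∀ u ∈ S, 0 < cos (u - c)) : StrictMonoOn (fun u ↦ sin (u - c)) S := by
  refine strictMonoOn_of_deriv_pos hS.ordConnected.convex (by fun_prop) fun u hu ↦ ?_
  rw [((hasDerivAt_sin (u - c)).comp_sub_const u c).deriv]
  exact hcos u (interior_subset hu)

theorem lt_of_cos_sub_pos {X : Type*} [TopologicalSpace X] [PreconnectedSpace X] {θ : X → ℝ}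
    (hθ : Continuous θ) {c : ℝ} (hcos : ∀ x, 0 < cos (θ x - c)) {x y : X}
    (hx : sin (θ x - c) < 0) (hy : 0 < sin (θ y - c)) : θ x < θ y :=
  ((strictMonoOn_sin_sub (isPreconnected_range hθ) (forall_mem_range.2 hcos)).lt_iff_lt
    (mem_range_self x) (mem_range_self y)).1 (hx.trans hy)

theorem false_of_unitSquare_boundary_angle {θ : I × I → ℝ} (hθ : Continuous θ)
    (h_bot : ∀ s, 0 < cos (θ (s, 0))) (h_top : ∀ s, cos (θ (s, 1)) < 0)
    (h_left : ∀ t, sin (θ (0, t)) < 0) (h_right : ∀ t, 0 < sin (θ (1, t))) : False := by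
  have bottom : θ (0, 0) < θ (1, 0) :=
    lt_of_cos_sub_pos (θ := fun s ↦ θ (s, 0)) (c := 0) (by fun_prop) (by simpa using h_bot)
      (by simpa using h_left 0) (by simpa using h_right 0)
  have right : θ (1, 0) < θ (1, 1) :=
    lt_of_cos_sub_pos (θ := fun t ↦ θ (1, t)) (c := π / 2) (by fun_prop)
      (by simpa [cos_sub_pi_div_two] using h_right) (by simpa [sin_sub_pi_div_two] using h_bot 1)
      (by simpa [sin_sub_pi_div_two] using h_top 1)
  have top : θ (1, 1) < θ (0, 1) :=
    lt_of_cos_sub_pos (θ := fun s ↦ θ (s, 1)) (c := π) (by fun_prop)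
      (by simpa [cos_sub_pi] using h_top) (by simpa [sin_sub_pi] using h_right 1)
      (by simpa [sin_sub_pi] using h_left 1)
  have left : θ (0, 1) < θ (0, 0) :=
    lt_of_cos_sub_pos (θ := fun t ↦ θ (0, t)) (c := -(π / 2)) (by fun_prop)
      (by simpa [cos_add_pi_div_two] using h_left) (by simpa [sin_add_pi_div_two] using h_top 0)
      (by simpa [sin_add_pi_div_two] using h_bot 0)
  linarith

/-- The Poincaré–Miranda theorem on the unit square, with strict sign conditions. -/
theorem exists_eq_zero_of_unitSquare {g : I × I → ℝ × ℝ} (hg : Continuous g)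
    (h_bot : ∀ s, 0 < (g (s, 0)).1) (h_top : ∀ s, (g (s, 1)).1 < 0)
    (h_left : ∀ t, (g (0, t)).2 < 0) (h_right : ∀ t, 0 < (g (1, t)).2) : ∃ p, g p = 0 := by
  by_contra! hg₀
  obtain ⟨L, hL, hexp⟩ := Complex.exists_continuous_exp_eq
    (f := fun p ↦ Complex.equivRealProdCLM.symm (g p)) (by fun_prop) (by simpa using hg₀)
  have hre (p) : (g p).1 = Real.exp (L p).re * cos (L p).im := by
    rw [← Complex.exp_re, hexp, Complex.equivRealProdCLM_symm_apply_re]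
  have him (p) : (g p).2 = Real.exp (L p).re * sin (L p).im := by
    rw [← Complex.exp_im, hexp, Complex.equivRealProdCLM_symm_apply_im]
  refine false_of_unitSquare_boundary_angle (θ := fun p ↦ (L p).im) (by fun_prop) (fun s ↦ ?_)
    (fun s ↦ ?_) (fun t ↦ ?_) (fun t ↦ ?_)
  · exact pos_of_mul_pos_right (hre _ ▸ h_bot s) (Real.exp_pos _).le
  · exact neg_of_mul_neg_right (hre _ ▸ h_top s) (Real.exp_pos _).le
  · exact neg_of_mul_neg_right (him _ ▸ h_left t) (Real.exp_pos _).le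
  · exact pos_of_mul_pos_right (him _ ▸ h_right t) (Real.exp_pos _).le

theorem paths_must_intersect_general (M C : ℝ)
    (γ₁ γ₂ : unitInterval → ℝ × ℝ)
    (hcont₁ : Continuous γ₁) (hcont₂ : Continuous γ₂)
    (a₁ b₁ a₂ b₂ : ℝ)
    (hγ₂0 : γ₂ 0 = (-M, 0)) (hγ₂1 : γ₂ 1 = (M, 0))
    (hγ₂range : ∀ t, γ₂ t ∈ Icc (-M) M ×ˢ Icc (-C) C)
    (hγ₁0 : γ₁ 0 = (a₁, b₁)) (hγ₁1 : γ₁ 1 = (a₂, b₂))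
    (hγ₁range : ∀ t, (γ₁ t).1 ∈ Ioo (-M) M)
    (hb₁ : b₁ < -C) (hb₂ : C < b₂) :
    ∃ s t : unitInterval, γ₁ s = γ₂ t := by
  obtain ⟨⟨s, t⟩, h⟩ := exists_eq_zero_of_unitSquare (g := fun p ↦ γ₁ p.1 - γ₂ p.2) (by fun_prop)
    (fun s ↦ sub_pos.2 (by simpa [hγ₂0] using (hγ₁range s).1))
    (fun s ↦ sub_neg.2 (by simpa [hγ₂1] using (hγ₁range s).2))
    (fun t ↦ sub_neg.2 (by simpa [hγ₁0] using hb₁.trans_le (hγ₂range t).2.1))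
    (fun t ↦ sub_pos.2 (by simpa [hγ₁1] using hb₂.trans_le' (hγ₂range t).2.2))
  exact ⟨s, t, sub_eq_zero.mp h⟩

/-- Lemma 5.3: a path crossing the strip `[−M,M] × [−C,C]` horizontally must
meet any path crossing it vertically inside the open strip. -/
theorem paths_must_intersect (M C : ℝ) (hM : 0 ≤ M) (hC : 0 ≤ C)
    (γ₁ γ₂ : unitInterval → ℝ × ℝ)
    (hcont₁ : Continuous γ₁) (hcont₂ : Continuous γ₂)
    (a₁ b₁ a₂ b₂ : ℝ)
    (hγ₂0 : γ₂ 0 = (-M, 0)) (hγ₂1 : γ₂ 1 = (M, 0))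
    (hγ₂range : ∀ t, γ₂ t ∈ Icc (-M) M ×ˢ Icc (-C) C)
    (hγ₁0 : γ₁ 0 = (a₁, b₁)) (hγ₁1 : γ₁ 1 = (a₂, b₂))
    (hγ₁range : ∀ t, (γ₁ t).1 ∈ Ioo (-M) M)
    (hb₁ : b₁ < -C) (hb₂ : C < b₂) :
    ∃ s t : unitInterval, γ₁ s = γ₂ t :=
  paths_must_intersect_general M C γ₁ γ₂ hcont₁ hcont₂ a₁ b₁ a₂ b₂ hγ₂0 hγ₂1 hγ₂range hγ₁0 hγ₁1
    hγ₁range hb₁ hb₂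
end

section
/- Let A be a 2×2 integer matrix with determinant 1 and |trace A| > 2, and let f̃ : ℝ² → ℝ² be a homeomorphism satisfying f̃(x + v) = f̃(x) + A v for all x ∈ ℝ² and v ∈ ℤ². Then for every nonzero vector v ∈ ℚ² and every ρ ∈ ℝ², the quantity |⟨f̃ⁿ(x) − x − n•ρ, v⟩| is unbounded over x ∈ ℝ² and n ∈ ℕ; in particular, f̃ does not have bounded deviation from any nonzero rational vector. -/
open Metric Set Filter Topology

noncomputable section

/-! Already the first iterate deviates unboundedly: on integer points
`f̃ w - w = f̃ 0 + (A - 1) w`, and `A - 1` is invertible since `det (A - 1) = 2 - tr A ≠ 0`.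
Hence `w ↦ ⟨(A - 1) w, v⟩` is a nonzero additive map on `ℤ²`, unbounded along multiples of
a suitable `w`. -/

open Matrix

theorem exists_nat_lt_abs_add_mul {K : Type*} [Field K] [LinearOrder K] [IsStrictOrderedRing K]
    [Archimedean K] (C M : K) {c : K} (hc : c ≠ 0) : ∃ k : ℕ, M < |C + k * c| := by
  obtain ⟨k, hk⟩ := exists_nat_gt ((M + |C|) / |c|)
  refine ⟨k, ?_⟩
  calc M < k * |c| - |C| := by rw [div_lt_iff₀ (abs_pos.2 hc)] at hk; linarith
    _ = |k * c| - |C| := by rw [abs_mul, Nat.abs_cast]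
    _ ≤ |C + k * c| := by
      have := abs_sub_abs_le_abs_sub (k * c) (-C)
      rwa [abs_neg, sub_neg_eq_add, add_comm] at this

theorem Matrix.exists_dotProduct_col_ne_zero {n R : Type*} [Fintype n] [DecidableEq n] [CommRing R]
    [NoZeroDivisors R] {M : Matrix n n R} (hM : M.det ≠ 0) {v : n → R} (hv : v ≠ 0) :
    ∃ j, v ⬝ᵥ M.col j ≠ 0 := by
  by_contra! h
  exact hv (eq_zero_of_vecMul_eq_zero hM (funext h))

theorem Matrix.det_sub_one_ne_zero_of_two_lt_abs_trace {R : Type*} [CommRing R] [LinearOrder R]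
    [IsStrictOrderedRing R] {A : Matrix (Fin 2) (Fin 2) R} (hdet : A.det = 1)
    (htr : 2 < |A.trace|) : (A - 1).det ≠ 0 := by
  have hdet_sub_one : (A - 1).det = 2 - A.trace := by
    rw [det_fin_two] at hdet ⊢
    simp only [trace_fin_two, sub_apply, one_fin_two, of_apply, cons_val', cons_val_zero,
      cons_val_one, empty_val', cons_val_fin_one]
    linear_combination hdet
  intro h
  rw [hdet_sub_one, sub_eq_zero] at h
  rw [← h, abs_two] at htr
  exact lt_irrefl _ htr

theorem intVec_sub (u w : Fin 2 → ℤ) : intVec (u - w) = intVec u - intVec w := by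
  ext i; simp [intVec]

theorem intVec_smul (k : ℤ) (u : Fin 2 → ℤ) : intVec (k • u) = (k : ℝ) • intVec u := by
  ext i; simp [intVec]

theorem inner_intVec (u : Fin 2 → ℤ) (v : E2) :
    inner ℝ (intVec u) v = WithLp.ofLp v ⬝ᵥ fun i => (u i : ℝ) := by
  simp [intVec, EuclideanSpace.inner_eq_star_dotProduct]

theorem exists_inner_intVec_mulVec_ne_zero {B : Matrix (Fin 2) (Fin 2) ℤ} (hB : B.det ≠ 0)
    {v : E2} (hv : v ≠ 0) : ∃ u : Fin 2 → ℤ, inner ℝ (intVec (B *ᵥ u)) v ≠ 0 := by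
  have hB_real : (B.map (Int.castRingHom ℝ)).det ≠ 0 := by
    rwa [← RingHom.mapMatrix_apply, ← RingHom.map_det, eq_intCast, Int.cast_ne_zero]
  obtain ⟨j, hj⟩ := exists_dotProduct_col_ne_zero hB_real (v := WithLp.ofLp v) (by simpa using hv)
  refine ⟨Pi.single j 1, ?_⟩
  rw [inner_intVec, mulVec_single_one]
  exact hj

theorem IsLiftMat.apply_intVec_sub {f : E2 → E2} {A : Matrix (Fin 2) (Fin 2) ℤ}
    (hf : IsLiftMat f A) (w : Fin 2 → ℤ) :
    f (intVec w) - intVec w = f 0 + intVec ((A - 1) *ᵥ w) := by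
  rw [sub_mulVec, one_mulVec, intVec_sub, ← add_sub_assoc, ← hf, zero_add]

/-- A lift of a homeomorphism homotopic to a linear Anosov automorphism has
unbounded deviation from every nonzero rational direction. -/
theorem anosov_unbounded_deviation (A : Matrix (Fin 2) (Fin 2) ℤ)
    (hdet : A.det = 1) (htr : 2 < |A.trace|)
    (f : E2 ≃ₜ E2) (hf : IsLiftMat ⇑f A) :
    ∀ v : E2, v ≠ 0 → (∀ i, ∃ q : ℚ, v i = (q : ℝ)) →
      ∀ (ρ : E2) (M : ℝ), ∃ (x : E2) (n : ℕ),
        M < |(inner ℝ ((⇑f)^[n] x - x - (n : ℝ) • ρ) v : ℝ)| := by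
  intro v hv _ ρ M
  obtain ⟨u, hu⟩ := exists_inner_intVec_mulVec_ne_zero
    (det_sub_one_ne_zero_of_two_lt_abs_trace hdet htr) hv
  obtain ⟨k, hk⟩ := exists_nat_lt_abs_add_mul (inner ℝ (f 0 - ρ) v) M hu
  refine ⟨intVec ((k : ℤ) • u), 1, ?_⟩
  have hdisp : (⇑f)^[1] (intVec ((k : ℤ) • u)) - intVec ((k : ℤ) • u) - ((1 : ℕ) : ℝ) • ρ
      = (f 0 - ρ) + (k : ℝ) • intVec ((A - 1) *ᵥ u) := by
    rw [Function.iterate_one, hf.apply_intVec_sub, mulVec_smul, intVec_smul,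
      Nat.cast_one, one_smul, Int.cast_natCast]
    abel
  rwa [hdisp, inner_add_left, real_inner_smul_left]
end
end
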